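/- Let Θ be a random variable taking values in the positive integers {1, 2, …}. Then its Shannon entropy satisfies H(Θ) ≤ E[log₂ Θ] + log₂(E[log₂ Θ] + 1) + 1. -/

import Mathlib

/-!
Gibbs' inequality against the subprobability `q_β(n) = (β - 1) / β · n ^ (-β)` on `{1, 2, …}`
(which has mass at most `1` by the integral test, for any `β > 1`) gives
`H(Θ) ≤ β E[log₂ Θ] + log₂ (β / (β - 1))`. Taking `β = 1 + 1 / E[log₂ Θ]` yields the bound.
-/

open MeasureTheory ProbabilityTheory Real
open scoped ENNReal

theorem tsum_nat_rpow_neg_le {β : ℝ} (hβ : 1 < β) : ∑' n : ℕ, (n : ℝ) ^ (-β) ≤ β / (β - 1) := by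
  have hs : Summable (fun n : ℕ => (n : ℝ) ^ (-β)) := Real.summable_nat_rpow.2 (by linarith)
  have htail : ∑' n : ℕ, ((n + 2 : ℕ) : ℝ) ^ (-β) ≤ ∫ x in Set.Ioi ((1 : ℕ) : ℝ), x ^ (-β) := by
    refine AntitoneOn.tsum_comp_add_le_integral (f := fun x : ℝ => x ^ (-β)) 1 ?_ ?_ ?_
    · intro x hx y _ hxy
      exact rpow_le_rpow_of_nonpos (by simp at hx; linarith) hxy (by linarith)
    · simpa using integrableOn_Ioi_rpow_of_lt (by linarith : -β < -1) zero_lt_one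
    · intro t ht
      simp at ht
      positivity
  rw [Nat.cast_one, integral_Ioi_rpow_of_lt (by linarith) zero_lt_one, one_rpow] at htail
  rw [← hs.sum_add_tsum_nat_add 2]
  simp only [Finset.sum_range_succ, Finset.sum_range_zero, Nat.cast_zero, Nat.cast_one,
    zero_rpow (by linarith : -β ≠ 0), one_rpow] at htail ⊢
  have hβ1 : β - 1 ≠ 0 := by linarith
  have hβ1' : -β + 1 ≠ 0 := by linarith
  have : 1 + -1 / (-β + 1) = β / (β - 1) := by field_simp; ring
  linarith

theorem neg_mul_logb_add_le {p q : ℝ} (hp : 0 ≤ p) (hq : 0 < q) :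
    -(p * logb 2 p) + p / log 2 ≤ -(p * logb 2 q) + q / log 2 := by
  have hgibbs : p * log q - p * log p ≤ q - p := by
    rcases hp.eq_or_lt with rfl | hp
    · simpa using hq.le
    · have h := mul_le_mul_of_nonneg_left (log_le_sub_one_of_pos (div_pos hq hp)) hp.le
      rw [log_div hq.ne' hp.ne', mul_sub, mul_sub, mul_div_cancel₀ _ hp.ne'] at h
      linarith
  simp only [logb]
  rw [← sub_nonneg]
  have : -(p * (log q / log 2)) + q / log 2 - (-(p * (log p / log 2)) + p / log 2)
      = (q - p - (p * log q - p * log p)) / log 2 := by ring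
  rw [this]
  exact div_nonneg (by linarith) (log_nonneg one_le_two)

section Entropy

variable {α : Type*} [MeasurableSpace α]

noncomputable def entropyBits (ν : Measure α) : ℝ≥0∞ :=
  ∑' a, ENNReal.ofReal (-((ν {a}).toReal * logb 2 (ν {a}).toReal))

variable [Countable α] [MeasurableSingletonClass α]

theorem tsum_measure_singleton_eq_one (ν : Measure α) [IsProbabilityMeasure ν] :
    ∑' a, ν {a} = 1 := by
  simpa using (lintegral_countable' (μ := ν) 1).symm

/-- Gibbs' inequality. In the pointwise form `-p log p + p ≤ -p log q + q` both sides are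
nonnegative, so it sums in `ℝ≥0∞` without summability assumptions; the extra totals
`∑ p = 1 ≥ ∑ q` then cancel. -/
theorem entropyBits_le_lintegral_neg_logb (ν : Measure α) [IsProbabilityMeasure ν] {q : α → ℝ}
    (hq : ∑' a, ENNReal.ofReal (q a) ≤ 1) (hsupp : ∀ a, ν {a} ≠ 0 → 0 < q a) :
    entropyBits ν ≤ ∫⁻ a, ENNReal.ofReal (-logb 2 (q a)) ∂ν := by
  set c := ENNReal.ofReal (1 / log 2)
  have hterm (a : α) : ENNReal.ofReal (-((ν {a}).toReal * logb 2 (ν {a}).toReal))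
      + ENNReal.ofReal ((ν {a}).toReal) * c
      ≤ ν {a} * ENNReal.ofReal (-logb 2 (q a)) + ENNReal.ofReal (q a) * c := by
    set p := (ν {a}).toReal
    have hp : ENNReal.ofReal p = ν {a} := ENNReal.ofReal_toReal (measure_ne_top ν {a})
    by_cases ha : ν {a} = 0
    · simp [p, ha]
    have hp0 : 0 ≤ p := measureReal_nonneg
    have hentropy : 0 ≤ -(p * logb 2 p) :=
      neg_nonneg.2 <| mul_nonpos_of_nonneg_of_nonpos hp0 <|
        logb_nonpos one_lt_two hp0 measureReal_le_one
    calc ENNReal.ofReal (-(p * logb 2 p)) + ENNReal.ofReal p * c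
        = ENNReal.ofReal (-(p * logb 2 p) + p / log 2) := by
          rw [← ENNReal.ofReal_mul hp0, ← ENNReal.ofReal_add hentropy (by positivity), mul_one_div]
      _ ≤ ENNReal.ofReal (-(p * logb 2 (q a)) + q a / log 2) :=
          ENNReal.ofReal_le_ofReal (neg_mul_logb_add_le hp0 (hsupp a ha))
      _ ≤ ENNReal.ofReal (-(p * logb 2 (q a))) + ENNReal.ofReal (q a / log 2) :=
          ENNReal.ofReal_add_le
      _ = ν {a} * ENNReal.ofReal (-logb 2 (q a)) + ENNReal.ofReal (q a) * c := by
          rw [← hp, ← ENNReal.ofReal_mul hp0, ← ENNReal.ofReal_mul' (by positivity), mul_neg,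
            mul_one_div]
  have hsum := ENNReal.tsum_le_tsum hterm
  rw [ENNReal.tsum_add, ENNReal.tsum_add, ENNReal.tsum_mul_right, ENNReal.tsum_mul_right] at hsum
  simp_rw [ENNReal.ofReal_toReal (measure_ne_top ν _), tsum_measure_singleton_eq_one, one_mul,
    mul_comm (ν _), ← lintegral_countable'] at hsum
  refine ENNReal.le_of_add_le_add_right ENNReal.ofReal_ne_top (hsum.trans ?_)
  gcongr
  exact mul_le_of_le_one_left bot_le hq

end Entropy

/-- `zetaWeight β 0 = 0`, since `0 ^ (-β) = 0` for `β ≠ 0`. -/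
noncomputable def zetaWeight (β : ℝ) (n : ℕ) : ℝ := (β - 1) / β * (n : ℝ) ^ (-β)

section ZetaWeight

variable {β : ℝ}

theorem zetaWeight_pos (hβ : 1 < β) {n : ℕ} (hn : n ≠ 0) : 0 < zetaWeight β n := by
  unfold zetaWeight
  have : (0 : ℝ) < n := by positivity
  have : 0 < β - 1 := by linarith
  positivity

theorem tsum_ofReal_zetaWeight_le_one (hβ : 1 < β) :
    ∑' n, ENNReal.ofReal (zetaWeight β n) ≤ 1 := by
  have hc : 0 ≤ (β - 1) / β := div_nonneg (by linarith) (by linarith)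
  unfold zetaWeight
  rw [← ENNReal.ofReal_tsum_of_nonneg (fun n => mul_nonneg hc (by positivity))
    ((Real.summable_nat_rpow.2 (by linarith)).mul_left _), ENNReal.ofReal_le_one]
  calc ∑' n : ℕ, (β - 1) / β * (n : ℝ) ^ (-β)
      = (β - 1) / β * ∑' n : ℕ, (n : ℝ) ^ (-β) := tsum_mul_left
    _ ≤ (β - 1) / β * (β / (β - 1)) := by gcongr; exact tsum_nat_rpow_neg_le hβ
    _ = 1 := by
      have : β - 1 ≠ 0 := by linarith
      have : β ≠ 0 := by linarith
      field_simp

theorem neg_logb_zetaWeight (hβ : 1 < β) {n : ℕ} (hn : n ≠ 0) :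
    -logb 2 (zetaWeight β n) = β * logb 2 n + logb 2 (β / (β - 1)) := by
  have hn : (0 : ℝ) < n := by positivity
  have hβ1 : 0 < β - 1 := by linarith
  have hβ0 : 0 < β := by linarith
  unfold zetaWeight
  rw [logb_mul (by positivity) (by positivity), logb_rpow_eq_mul_logb_of_pos hn,
    logb_div hβ1.ne' hβ0.ne', logb_div hβ0.ne' hβ1.ne']
  ring

end ZetaWeight

theorem logb_two_natCast_nonneg (n : ℕ) : 0 ≤ logb 2 (n : ℝ) :=
  div_nonneg (log_natCast_nonneg n) (log_nonneg one_le_two)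

theorem entropyBits_le_mul_integral_logb_add (ν : Measure ℕ) [IsProbabilityMeasure ν]
    (h0 : ν {0} = 0) (hint : Integrable (fun n : ℕ => logb 2 (n : ℝ)) ν) {β : ℝ} (hβ : 1 < β) :
    entropyBits ν ≤ ENNReal.ofReal (β * (∫ n, logb 2 (n : ℝ) ∂ν) + logb 2 (β / (β - 1))) := by
  have hne : ∀ᵐ n ∂ν, n ≠ 0 := ae_iff.2 (by simpa using h0)
  have hC : 0 ≤ logb 2 (β / (β - 1)) :=
    logb_nonneg one_lt_two ((one_le_div (by linarith)).2 (by linarith))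
  calc entropyBits ν ≤ ∫⁻ n, ENNReal.ofReal (-logb 2 (zetaWeight β n)) ∂ν :=
        entropyBits_le_lintegral_neg_logb ν (tsum_ofReal_zetaWeight_le_one hβ)
          fun n hn => zetaWeight_pos hβ (by rintro rfl; exact hn h0)
    _ = ∫⁻ n, ENNReal.ofReal (β * logb 2 (n : ℝ) + logb 2 (β / (β - 1))) ∂ν := by
        refine lintegral_congr_ae ?_
        filter_upwards [hne] with n hn
        rw [neg_logb_zetaWeight hβ hn]
    _ = ENNReal.ofReal (∫ n, β * logb 2 (n : ℝ) + logb 2 (β / (β - 1)) ∂ν) :=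
        (ofReal_integral_eq_lintegral_ofReal ((hint.const_mul β).add (integrable_const _))
          (ae_of_all _ fun n =>
            add_nonneg (mul_nonneg (by linarith) (logb_two_natCast_nonneg n)) hC)).symm
    _ = _ := by rw [integral_add (hint.const_mul β) (integrable_const _), integral_const_mul]; simp

theorem exists_one_lt_mul_add_logb_le {A : ℝ} (hA : 0 ≤ A) :
    ∃ β, 1 < β ∧ β * A + logb 2 (β / (β - 1)) ≤ A + logb 2 (A + 1) + 1 := by
  rcases hA.eq_or_lt with rfl | hA
  · exact ⟨2, one_lt_two, by norm_num⟩
  · refine ⟨(A + 1) / A, (one_lt_div hA).2 (by linarith), le_of_eq ?_⟩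
    have hβ : (A + 1) / A / ((A + 1) / A - 1) = A + 1 := by
      field_simp
      ring
    rw [div_mul_cancel₀ _ hA.ne', hβ]
    ring

/-- **Maximum-entropy bound** (Appendix B of the paper): for a random variable `Θ` taking
values in the positive integers `{1,2,…}`, the Shannon entropy (in bits, computed in `ℝ≥0∞`
as the sum of the nonnegative terms `−p(θ) log₂ p(θ)`) satisfies
`H(Θ) ≤ E[log₂ Θ] + log₂(E[log₂ Θ] + 1) + 1`. -/
theorem entropy_le_expected_log_add
    {Ω : Type*} [MeasurableSpace Ω] (μ : Measure Ω) [IsProbabilityMeasure μ]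
    (Θ : Ω → ℕ) (hΘ : Measurable Θ) (hpos : ∀ᵐ ω ∂μ, 1 ≤ Θ ω)
    (hint : Integrable (fun ω => Real.logb 2 (Θ ω : ℝ)) μ) :
    ∑' n : ℕ,
        ENNReal.ofReal
          (-((μ.map Θ {n}).toReal * Real.logb 2 (μ.map Θ {n}).toReal)) ≤
      ENNReal.ofReal
        ((∫ ω, Real.logb 2 (Θ ω : ℝ) ∂μ) +
          Real.logb 2 ((∫ ω, Real.logb 2 (Θ ω : ℝ) ∂μ) + 1) + 1) := by
  set ν := μ.map Θ
  have : IsProbabilityMeasure ν := Measure.isProbabilityMeasure_map hΘ.aemeasurable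
  have h0 : ν {0} = 0 := by
    rw [Measure.map_apply hΘ (measurableSet_singleton 0)]
    simpa [Set.preimage, Nat.one_le_iff_ne_zero] using ae_iff.1 hpos
  have hlog : AEStronglyMeasurable (fun n : ℕ => logb 2 (n : ℝ)) ν :=
    measurable_from_top.aestronglyMeasurable
  have hintν : Integrable (fun n : ℕ => logb 2 (n : ℝ)) ν :=
    (integrable_map_measure hlog hΘ.aemeasurable).2 hint
  have hA : ∫ n, logb 2 (n : ℝ) ∂ν = ∫ ω, logb 2 (Θ ω : ℝ) ∂μ :=
    integral_map hΘ.aemeasurable hlog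
  obtain ⟨β, hβ, hle⟩ := exists_one_lt_mul_add_logb_le (integral_nonneg logb_two_natCast_nonneg)
  rw [← hA]
  exact (entropyBits_le_mul_integral_logb_add ν h0 hintν hβ).trans (ENNReal.ofReal_le_ofReal hle)
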